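/- For every natural number n ≥ 15, if λ₁, λ₂, λ₃, λ₄ are the four real roots (with multiplicity) of the polynomial x^4 − (n+3)x^2 − 8x + 4n − 24, then |λ₁| + |λ₂| + |λ₃| + |λ₄| < 4 + √(n−1) + √(n+3). -/

import Mathlib

open Polynomial MeasureTheory

/-- The adjacency matrix of a simple graph over `ℝ` is Hermitian. -/
lemma adjHerm {V : Type*} [Fintype V] (G : SimpleGraph V) [DecidableRel G.Adj] :
    (SimpleGraph.adjMatrix ℝ G).IsHermitian := by
  ext i j
  simp [Matrix.conjTranspose_apply, SimpleGraph.adj_comm]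

/-- The energy of a graph: sum of absolute values of adjacency eigenvalues. -/
noncomputable def energy {V : Type*} [Fintype V] [DecidableEq V] (G : SimpleGraph V)
    [DecidableRel G.Adj] : ℝ :=
  ∑ i, |(adjHerm G).eigenvalues i|

/-- `SnE n k` is the graph `S_{n, n-1+k}`: the star on `n` vertices with center `0`,
plus `k` extra edges joining the fixed leaf `1` to the leaves `2, …, k+1`. -/
def SnE (n k : ℕ) : SimpleGraph (Fin n) where
  Adj v w := v ≠ w ∧ (v.val = 0 ∨ w.val = 0 ∨
    (v.val = 1 ∧ 2 ≤ w.val ∧ w.val ≤ k + 1) ∨ (w.val = 1 ∧ 2 ≤ v.val ∧ v.val ≤ k + 1))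
  symm := by constructor; intro v w h; exact ⟨h.1.symm, by tauto⟩
  loopless := by constructor; intro v h; exact h.1 rfl

instance {n k : ℕ} : DecidableRel (SnE n k).Adj := fun v w => by
  unfold SnE; exact inferInstanceAs (Decidable (_ ∧ _))

instance {α β : Type*} (G : SimpleGraph α) (H : SimpleGraph β) [DecidableRel G.Adj]
    [DecidableRel H.Adj] : DecidableRel (G ⊕g H).Adj := fun u v =>
  match u, v with
  | Sum.inl a, Sum.inl b => decidable_of_iff (G.Adj a b) (by simp [SimpleGraph.sum])
  | Sum.inr a, Sum.inr b => decidable_of_iff (H.Adj a b) (by simp [SimpleGraph.sum])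
  | Sum.inl _, Sum.inr _ => .isFalse (by simp [SimpleGraph.sum])
  | Sum.inr _, Sum.inl _ => .isFalse (by simp [SimpleGraph.sum])

/- The quartic is negative at `±2` and positive at `-√(n-1)`, `0` and `√(n+3)`, so its four roots
lie one in each of `(-√(n-1), -2)`, `(-2, 0)`, `(0, 2)` and `(2, √(n+3))`. Their absolute values
are therefore below `√(n-1)`, `2`, `2` and `√(n+3)`. -/

theorem Finset.sum_comp_eq_sum_of_subset_range {ι α M : Type*} [Fintype ι] [DecidableEq α]
    [AddCommMonoid M] (l : ι → α) {s : Finset α} (hs : (s : Set α) ⊆ Set.range l)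
    (hcard : Fintype.card ι ≤ s.card) (g : α → M) :
    ∑ i, g (l i) = ∑ x ∈ s, g x := by
  have hsub : s ⊆ univ.image l := fun x hx => by simpa using hs hx
  have himage_le : (univ.image l).card ≤ Fintype.card ι := card_image_le
  have himage : s = univ.image l := eq_of_subset_of_card_le hsub (himage_le.trans hcard)
  have hinj : Set.InjOn l (univ : Finset ι) :=
    card_image_iff.mp (le_antisymm himage_le (by rw [← himage]; exact hcard))
  rw [himage, sum_image hinj]

theorem Polynomial.exists_eq_of_isRoot_eq_prod {R ι : Type*} [CommRing R] [IsDomain R]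
    [Fintype ι] {p : R[X]} {l : ι → R} (hp : p = ∏ i, (X - C (l i))) {x : R}
    (hx : p.IsRoot x) : ∃ i, l i = x := by
  rw [hp, IsRoot, eval_prod, Finset.prod_eq_zero_iff] at hx
  obtain ⟨i, -, hi⟩ := hx
  exact ⟨i, (sub_eq_zero.mp (by simpa using hi)).symm⟩

theorem Polynomial.exists_isRoot_mem_Ioo_of_eval_mul_eval_neg {p : ℝ[X]} {a b : ℝ}
    (hab : a ≤ b) (h : p.eval a * p.eval b < 0) : ∃ x ∈ Set.Ioo a b, p.IsRoot x := by
  have hcont := p.continuous.continuousOn (s := Set.Icc a b)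
  rcases mul_neg_iff.mp h with ⟨ha, hb⟩ | ⟨ha, hb⟩
  · exact intermediate_value_Ioo' hab hcont ⟨hb, ha⟩
  · exact intermediate_value_Ioo hab hcont ⟨ha, hb⟩

noncomputable def quartic (n : ℝ) : ℝ[X] :=
  X ^ 4 - C (n + 3) * X ^ 2 - C 8 * X + C (4 * n - 24)

section quartic

variable {n : ℝ}

theorem eval_quartic (x : ℝ) :
    (quartic n).eval x = x ^ 4 - (n + 3) * x ^ 2 - 8 * x + (4 * n - 24) := by
  simp [quartic]

theorem quartic_eval_neg_two : (quartic n).eval (-2) = -4 := by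
  rw [eval_quartic]; ring

theorem quartic_eval_two : (quartic n).eval 2 = -36 := by
  rw [eval_quartic]; ring

theorem quartic_eval_zero_pos (hn : 6 < n) : 0 < (quartic n).eval 0 := by
  rw [eval_quartic]; linarith

theorem quartic_eval_neg_sqrt_pos (hn : 29 / 4 < n) : 0 < (quartic n).eval (-√(n - 1)) := by
  have hsq : √(n - 1) ^ 2 = n - 1 := Real.sq_sqrt (by linarith)
  have hgt : 5 / 2 < √(n - 1) := Real.lt_sqrt_of_sq_lt (by linarith)
  have hval : (quartic n).eval (-√(n - 1)) = 8 * √(n - 1) - 20 := by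
    rw [eval_quartic]
    linear_combination (√(n - 1) ^ 2 - 4) * hsq
  linarith

theorem quartic_eval_sqrt_pos (hn : 15 ≤ n) : 0 < (quartic n).eval √(n + 3) := by
  have hsq : √(n + 3) ^ 2 = n + 3 := Real.sq_sqrt (by linarith)
  have hlt : √(n + 3) < (n - 6) / 2 :=
    (Real.sqrt_lt' (by linarith)).mpr (by nlinarith)
  have hval : (quartic n).eval √(n + 3) = 4 * n - 24 - 8 * √(n + 3) := by
    rw [eval_quartic]
    linear_combination (√(n + 3) ^ 2) * hsq
  linarith

theorem exists_isRoot_quartic_of_le (hn : 15 ≤ n) :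
    ∃ a b c d : ℝ, (quartic n).IsRoot a ∧ (quartic n).IsRoot b ∧ (quartic n).IsRoot c ∧
      (quartic n).IsRoot d ∧ -√(n - 1) < a ∧ a < -2 ∧ -2 < b ∧ b < 0 ∧ 0 < c ∧ c < 2 ∧
      2 < d ∧ d < √(n + 3) := by
  have hm2 : (quartic n).eval (-2) < 0 := quartic_eval_neg_two.trans_lt (by norm_num)
  have h2 : (quartic n).eval 2 < 0 := quartic_eval_two.trans_lt (by norm_num)
  have h0 := quartic_eval_zero_pos (n := n) (by linarith)
  obtain ⟨a, ⟨ha₁, ha₂⟩, ha⟩ := exists_isRoot_mem_Ioo_of_eval_mul_eval_neg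
    (neg_le_neg (Real.le_sqrt_of_sq_le (by linarith)))
    (mul_neg_of_pos_of_neg (quartic_eval_neg_sqrt_pos (by linarith)) hm2)
  obtain ⟨b, ⟨hb₁, hb₂⟩, hb⟩ := exists_isRoot_mem_Ioo_of_eval_mul_eval_neg (by norm_num)
    (mul_neg_of_neg_of_pos hm2 h0)
  obtain ⟨c, ⟨hc₁, hc₂⟩, hc⟩ := exists_isRoot_mem_Ioo_of_eval_mul_eval_neg (by norm_num)
    (mul_neg_of_pos_of_neg h0 h2)
  obtain ⟨d, ⟨hd₁, hd₂⟩, hd⟩ := exists_isRoot_mem_Ioo_of_eval_mul_eval_neg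
    (Real.le_sqrt_of_sq_le (by linarith))
    (mul_neg_of_neg_of_pos h2 (quartic_eval_sqrt_pos hn))
  exact ⟨a, b, c, d, ha, hb, hc, hd, ha₁, ha₂, hb₁, hb₂, hc₁, hc₂, hd₁, hd₂⟩

end quartic

/-- If `λ₁, …, λ₄` are the four real roots (with multiplicity) of
`x^4 - (n+3)x^2 - 8x + 4n - 24` for `n ≥ 15`, then the sum of their absolute values is
less than `4 + √(n-1) + √(n+3)`. -/
theorem quartic_roots_abs_sum_lt (n : ℕ) (hn : 15 ≤ n) (l : Fin 4 → ℝ)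
    (h : (X ^ 4 - C ((n : ℝ) + 3) * X ^ 2 - C (8 : ℝ) * X + C (4 * (n : ℝ) - 24) : ℝ[X]) =
      ∏ i, (X - C (l i))) :
    ∑ i, |l i| < 4 + Real.sqrt ((n : ℝ) - 1) + Real.sqrt ((n : ℝ) + 3) := by
  obtain ⟨a, b, c, d, ha, hb, hc, hd, ha₁, ha₂, hb₁, hb₂, hc₁, hc₂, hd₁, hd₂⟩ :=
    exists_isRoot_quartic_of_le (n := n) (by exact_mod_cast hn)
  have hroots : (({a, b, c, d} : Finset ℝ) : Set ℝ) ⊆ Set.range l := by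
    simp only [Finset.coe_insert, Finset.coe_singleton, Set.insert_subset_iff,
      Set.singleton_subset_iff, Set.mem_range]
    exact ⟨exists_eq_of_isRoot_eq_prod h ha, exists_eq_of_isRoot_eq_prod h hb,
      exists_eq_of_isRoot_eq_prod h hc, exists_eq_of_isRoot_eq_prod h hd⟩
  have hcard : ({a, b, c, d} : Finset ℝ).card = 4 := by
    rw [Finset.card_insert_of_notMem, Finset.card_insert_of_notMem, Finset.card_pair] <;> grind
  rw [Finset.sum_comp_eq_sum_of_subset_range l hroots (by simp [hcard]),
    Finset.sum_insert (by grind), Finset.sum_insert (by grind), Finset.sum_pair (by grind),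
    abs_of_neg (by linarith), abs_of_neg hb₂, abs_of_pos hc₁, abs_of_pos (by linarith)]
  linarith
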